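/- arXiv:2604.02735 — 2 statements merged into one kernel-verified Lean document; each statement's English description precedes it below -/
import Mathlib

section
/- Let f ∈ L²(ℝ) and let M ≥ 2 be an integer. If a_0, …, a_M are Galerkin coefficients of order M for f (with convention a_{−1} = 0), then for every integer m with 0 ≤ m ≤ M−2 one has |f̂_m − a_m| = √((m+2)/(m+1)) · |f̂_{m+2} − a_{m+2}|. -/
open MeasureTheory Real

/-- Physicists' Hermite polynomials: H_0 = 1, H_1 = 2x, H_{n+1} = 2x H_n - 2n H_{n-1}. -/
noncomputable def physHermite : ℕ → ℝ → ℝ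
  | 0 => fun _ => 1
  | 1 => fun x => 2 * x
  | n + 2 => fun x => 2 * x * physHermite (n + 1) x - 2 * (n + 1) * physHermite n x

/-- Generalized Hermite functions H̃_n(x) = π^{-1/4} (2^n n!)^{-1/2} e^{-x²/2} H_n(x). -/
noncomputable def tildeH (n : ℕ) (x : ℝ) : ℝ :=
  Real.pi ^ (-(1 / 4) : ℝ) * (Real.sqrt (2 ^ n * n.factorial))⁻¹ *
    Real.exp (-x ^ 2 / 2) * physHermite n x

/-- Hermite coefficients f̂_m = ∫ f H̃_m. -/
noncomputable def hermCoeff (f : ℝ → ℝ) (m : ℕ) : ℝ := ∫ x : ℝ, f x * tildeH m x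

/-- b_l = √((l+1)/2) f̂_{l+1} - √(l/2) f̂_{l-1} (with the convention f̂_{-1} = 0;
here `l - 1` is truncated ℕ-subtraction, harmless since √(0/2) = 0 when l = 0). -/
noncomputable def bCoeff (f : ℝ → ℝ) (l : ℕ) : ℝ :=
  Real.sqrt (((l : ℝ) + 1) / 2) * hermCoeff f (l + 1) -
    Real.sqrt ((l : ℝ) / 2) * hermCoeff f (l - 1)

/-- `a 0, …, a M` are Galerkin coefficients of order `M` for `f`
(with the convention a_{-1} = 0, again harmless by ℕ-subtraction since √(0/2) = 0). -/
def IsGalerkinCoeffs (f : ℝ → ℝ) (M : ℕ) (a : ℕ → ℝ) : Prop :=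
  (∀ l : ℕ, l + 1 ≤ M →
      bCoeff f l = Real.sqrt (((l : ℝ) + 1) / 2) * a (l + 1) -
        Real.sqrt ((l : ℝ) / 2) * a (l - 1)) ∧
  bCoeff f M = -Real.sqrt ((M : ℝ) / 2) * a (M - 1) ∧
  bCoeff f (M + 1) = -Real.sqrt (((M : ℝ) + 1) / 2) * a M

/-! The Galerkin equations have the same shape as the definition of `b_l`, so subtracting them
cancels `b_l` and the errors `e_m = f̂_m - a_m` satisfy `√((m+2)/2) e_{m+2} = √((m+1)/2) e_m`
for `m + 2 ≤ M`; dividing by the positive factor gives the claim. -/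

lemma IsGalerkinCoeffs.sqrt_mul_error_add_two {f : ℝ → ℝ} {M : ℕ} {a : ℕ → ℝ}
    (ha : IsGalerkinCoeffs f M a) {l : ℕ} (hl : l + 2 ≤ M) :
    √(((l : ℝ) + 2) / 2) * (hermCoeff f (l + 2) - a (l + 2)) =
      √(((l : ℝ) + 1) / 2) * (hermCoeff f l - a l) := by
  have h := ha.1 (l + 1) hl
  simp only [bCoeff, Nat.add_sub_cancel, Nat.cast_add, Nat.cast_one, add_assoc,
    one_add_one_eq_two] at h
  linear_combination h

lemma abs_eq_sqrt_div_mul_abs_of_sqrt_mul_eq {p q x y : ℝ} (hp : 0 < p)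
    (h : √p * x = √q * y) : |x| = √(q / p) * |y| := by
  have hsp : 0 < √p := Real.sqrt_pos.2 hp
  rw [Real.sqrt_div' q hp.le, div_mul_eq_mul_div, eq_div_iff hsp.ne',
    ← abs_of_nonneg (Real.sqrt_nonneg q), ← abs_mul, ← h, abs_mul, abs_of_pos hsp, mul_comm]

theorem galerkin_coeff_error_recursion_general (f : ℝ → ℝ)
    (M : ℕ) (hM : 2 ≤ M) (a : ℕ → ℝ) (ha : IsGalerkinCoeffs f M a) :
    ∀ m : ℕ, m ≤ M - 2 →
      |hermCoeff f m - a m| =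
        Real.sqrt (((m : ℝ) + 2) / ((m : ℝ) + 1)) * |hermCoeff f (m + 2) - a (m + 2)| := by
  intro m hm
  have hrec := ha.sqrt_mul_error_add_two (l := m) (by omega)
  rw [← div_div_div_cancel_right₀ two_ne_zero]
  exact abs_eq_sqrt_div_mul_abs_of_sqrt_mul_eq (by positivity) hrec.symm

/-- the backward recursion for the Galerkin coefficient errors. -/
theorem galerkin_coeff_error_recursion (f : ℝ → ℝ) (hf : MemLp f 2 (volume : Measure ℝ))
    (M : ℕ) (hM : 2 ≤ M) (a : ℕ → ℝ) (ha : IsGalerkinCoeffs f M a) :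
    ∀ m : ℕ, m ≤ M - 2 →
      |hermCoeff f m - a m| =
        Real.sqrt (((m : ℝ) + 2) / ((m : ℝ) + 1)) * |hermCoeff f (m + 2) - a (m + 2)| :=
  galerkin_coeff_error_recursion_general f M hM a ha
end

section
/- For all m, l ∈ ℕ, ∫_ℝ H̃_m′(x) H̃_l(x) dx = √(m/2) if l = m − 1, equals −√((m+1)/2) if l = m + 1, and equals 0 otherwise (in particular, for m = 0 the only nonzero value is −√(1/2) at l = 1). -/
open MeasureTheory Real

open Polynomial

/-!
Gaussian integration by parts, `∫ (p' - 2xp) e^{-x²} = 0` for polynomials `p`, combined with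
`H_n' = 2n H_{n-1}` and the three-term recurrence, gives
`∫ H_{n+1} H_l e^{-x²} = 2l ∫ H_n H_{l-1} e^{-x²}`; hence the `H_n` are orthogonal for the
weight `e^{-x²}` with `∫ H_n² e^{-x²} = 2ⁿ n! √π`, i.e. the `H̃_n` are orthonormal.
The same two identities give the ladder relation
`H̃_m' = √(m/2) H̃_{m-1} - √((m+1)/2) H̃_{m+1}`, from which the integral is read off.
-/

theorem integrable_eval_mul_exp_neg_sq (p : ℝ[X]) :
    Integrable fun x : ℝ => p.eval x * exp (-x ^ 2) := by
  induction p using Polynomial.induction_on' with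
  | add p q hp hq => simpa only [eval_add, add_mul] using hp.fun_add hq
  | monomial n a =>
    have h := integrable_rpow_mul_exp_neg_mul_sq one_pos (s := n)
      (by linarith [n.cast_nonneg (α := ℝ)])
    simpa [eval_monomial, mul_assoc, rpow_natCast] using h.const_mul a

noncomputable def gaussianIntegral : ℝ[X] →ₗ[ℝ] ℝ where
  toFun p := ∫ x, p.eval x * exp (-x ^ 2)
  map_add' p q := by
    simp only [eval_add, add_mul]
    exact integral_add (integrable_eval_mul_exp_neg_sq p) (integrable_eval_mul_exp_neg_sq q)
  map_smul' c p := by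
    simp only [eval_smul, smul_eq_mul, mul_assoc, integral_const_mul, RingHom.id_apply]

theorem gaussianIntegral_apply (p : ℝ[X]) :
    gaussianIntegral p = ∫ x, p.eval x * exp (-x ^ 2) := rfl

theorem gaussianIntegral_one : gaussianIntegral 1 = √π := by
  simpa [gaussianIntegral_apply] using integral_gaussian 1

theorem gaussianIntegral_derivative_sub_two_X_mul (p : ℝ[X]) :
    gaussianIntegral (derivative p - 2 * X * p) = 0 := by
  refine integral_eq_zero_of_hasDerivAt_of_integrable (f := fun x => p.eval x * exp (-x ^ 2))
    (fun x => ?_) (integrable_eval_mul_exp_neg_sq _) (integrable_eval_mul_exp_neg_sq p)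
  have hsq : HasDerivAt (fun x : ℝ => -x ^ 2) (-(2 * x)) x := by
    simpa using (hasDerivAt_pow 2 x).fun_neg
  refine ((p.hasDerivAt x).fun_mul hsq.exp).congr_deriv ?_
  simp only [eval_sub, eval_mul, eval_X, eval_ofNat]
  ring

noncomputable def physHermitePoly : ℕ → ℝ[X]
  | 0 => 1
  | 1 => 2 * X
  | n + 2 => 2 * X * physHermitePoly (n + 1) - 2 * ((n : ℝ[X]) + 1) * physHermitePoly n

theorem physHermite_eq_eval : ∀ n, physHermite n = fun x => (physHermitePoly n).eval x
  | 0 => by simp [physHermite, physHermitePoly]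
  | 1 => by simp [physHermite, physHermitePoly]
  | n + 2 => by
    funext x
    simp [physHermite, physHermitePoly, physHermite_eq_eval n, physHermite_eq_eval (n + 1)]

theorem physHermitePoly_succ (n : ℕ) :
    physHermitePoly (n + 1) =
      2 * X * physHermitePoly n - 2 * (n : ℝ[X]) * physHermitePoly (n - 1) := by
  cases n with
  | zero => simp [physHermitePoly]
  | succ n => simp [physHermitePoly]

theorem derivative_physHermitePoly :
    ∀ n, derivative (physHermitePoly n) = 2 * (n : ℝ[X]) * physHermitePoly (n - 1)
  | 0 => by simp [physHermitePoly]
  | 1 => by simp [physHermitePoly]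
  | n + 2 => by
    simp only [physHermitePoly, derivative_sub, derivative_mul, derivative_X, derivative_ofNat,
      derivative_natCast, derivative_add, derivative_one, derivative_physHermitePoly (n + 1),
      derivative_physHermitePoly n]
    push_cast
    linear_combination (-2 * ((n : ℝ[X]) + 1)) * physHermitePoly_succ n

theorem derivative_physHermitePoly_sub_two_X_mul (n : ℕ) :
    derivative (physHermitePoly n) - 2 * X * physHermitePoly n = -physHermitePoly (n + 1) := by
  rw [derivative_physHermitePoly, physHermitePoly_succ]
  ring

theorem gaussianIntegral_physHermitePoly_succ_mul (n l : ℕ) :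
    gaussianIntegral (physHermitePoly (n + 1) * physHermitePoly l) =
      2 * l * gaussianIntegral (physHermitePoly n * physHermitePoly (l - 1)) := by
  have hparts := gaussianIntegral_derivative_sub_two_X_mul (physHermitePoly n * physHermitePoly l)
  have hpoly : derivative (physHermitePoly n * physHermitePoly l) -
        2 * X * (physHermitePoly n * physHermitePoly l) =
      (2 * l : ℝ) • (physHermitePoly n * physHermitePoly (l - 1)) -
        physHermitePoly (n + 1) * physHermitePoly l := by
    rw [derivative_mul, derivative_physHermitePoly l, smul_eq_C_mul]
    simp only [map_mul, map_ofNat, map_natCast]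
    linear_combination physHermitePoly l * derivative_physHermitePoly_sub_two_X_mul n
  rw [hpoly, map_sub, map_smul, smul_eq_mul, sub_eq_zero] at hparts
  exact hparts.symm

theorem gaussianIntegral_physHermitePoly_mul (n l : ℕ) :
    gaussianIntegral (physHermitePoly n * physHermitePoly l) =
      if n = l then 2 ^ n * n.factorial * √π else 0 := by
  induction n generalizing l with
  | zero =>
    cases l with
    | zero => simp [physHermitePoly, gaussianIntegral_one]
    | succ l => simp [mul_comm (physHermitePoly 0), gaussianIntegral_physHermitePoly_succ_mul]
  | succ n ih =>
    rw [gaussianIntegral_physHermitePoly_succ_mul]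
    cases l with
    | zero => simp
    | succ l =>
      rw [add_tsub_cancel_right, ih]
      obtain rfl | hne := eq_or_ne n l
      · simp only [if_true, Nat.factorial_succ, pow_succ]
        push_cast
        ring
      · simp [hne]

noncomputable def hermiteNormConst (n : ℕ) : ℝ :=
  π ^ (-(1 / 4) : ℝ) * (√(2 ^ n * n.factorial))⁻¹

theorem hermiteNormConst_succ (n : ℕ) :
    hermiteNormConst (n + 1) = hermiteNormConst n / √(2 * (n + 1)) := by
  rw [hermiteNormConst, hermiteNormConst, Nat.factorial_succ, pow_succ, Nat.cast_mul,
    show (2 : ℝ) ^ n * 2 * ((n + 1 : ℕ) * n.factorial) = 2 ^ n * n.factorial * (2 * (n + 1)) by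
      push_cast; ring,
    sqrt_mul (by positivity)]
  field_simp

theorem hermiteNormConst_sq_mul (n : ℕ) :
    hermiteNormConst n ^ 2 * (2 ^ n * n.factorial * √π) = 1 := by
  have hpi : (π ^ (-(1 / 4) : ℝ)) ^ 2 * √π = 1 := by
    rw [sqrt_eq_rpow, ← rpow_natCast, ← rpow_mul pi_pos.le, ← rpow_add pi_pos]
    norm_num
  have hsq : (√(2 ^ n * n.factorial : ℝ)) ^ 2 = 2 ^ n * n.factorial := sq_sqrt (by positivity)
  rw [hermiteNormConst, mul_pow, inv_pow, hsq]
  field_simp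
  linear_combination hpi

theorem sqrt_half_mul_hermiteNormConst_succ (n : ℕ) :
    √((n + 1) / 2) * hermiteNormConst (n + 1) = hermiteNormConst n / 2 := by
  have hsqrt : √(2 * (n + 1 : ℝ)) = 2 * √((n + 1) / 2) := by
    rw [show (2 : ℝ) * (n + 1) = 2 ^ 2 * ((n + 1) / 2) by ring, sqrt_mul (by positivity),
      sqrt_sq zero_le_two]
  rw [hermiteNormConst_succ, hsqrt]
  field_simp

theorem sqrt_half_mul_hermiteNormConst_pred (n : ℕ) :
    √(n / 2) * hermiteNormConst (n - 1) = n * hermiteNormConst n := by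
  cases n with
  | zero => simp
  | succ n =>
    have hsucc := sqrt_half_mul_hermiteNormConst_succ n
    have hsq : √((n + 1 : ℝ) / 2) * √((n + 1) / 2) = (n + 1) / 2 :=
      mul_self_sqrt (by positivity)
    rw [add_tsub_cancel_right]
    push_cast
    linear_combination (-2 * √((n + 1 : ℝ) / 2)) * hsucc + 2 * hermiteNormConst (n + 1) * hsq

theorem tildeH_eq (n : ℕ) (x : ℝ) :
    tildeH n x = hermiteNormConst n * (exp (-x ^ 2 / 2) * (physHermitePoly n).eval x) := by
  rw [tildeH, physHermite_eq_eval, hermiteNormConst]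
  ring

theorem tildeH_mul_tildeH (n l : ℕ) (x : ℝ) :
    tildeH n x * tildeH l x = hermiteNormConst n * hermiteNormConst l *
      ((physHermitePoly n * physHermitePoly l).eval x * exp (-x ^ 2)) := by
  have hexp : exp (-x ^ 2) = exp (-x ^ 2 / 2) * exp (-x ^ 2 / 2) := by
    rw [← exp_add]; ring_nf
  rw [tildeH_eq, tildeH_eq, eval_mul, hexp]
  ring

theorem integrable_tildeH_mul_tildeH (n l : ℕ) :
    Integrable fun x => tildeH n x * tildeH l x := by
  simp_rw [tildeH_mul_tildeH]
  exact (integrable_eval_mul_exp_neg_sq _).const_mul _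

theorem integral_tildeH_mul_tildeH (n l : ℕ) :
    ∫ x, tildeH n x * tildeH l x = if n = l then 1 else 0 := by
  simp_rw [tildeH_mul_tildeH, integral_const_mul]
  rw [← gaussianIntegral_apply, gaussianIntegral_physHermitePoly_mul]
  split_ifs with h
  · subst h
    rw [← hermiteNormConst_sq_mul n]
    ring
  · simp

/-- For `n = 0` the truncated index `n - 1` is `0`, but its coefficient `√(0/2)` vanishes. -/
theorem hasDerivAt_tildeH (n : ℕ) (x : ℝ) :
    HasDerivAt (tildeH n)
      (√(n / 2) * tildeH (n - 1) x - √((n + 1) / 2) * tildeH (n + 1) x) x := by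
  have hexp := ((hasDerivAt_pow 2 x).fun_neg.div_const 2).exp
  have h := (hexp.fun_mul ((physHermitePoly n).hasDerivAt x)).const_mul (hermiteNormConst n)
  rw [show tildeH n = _ from funext (tildeH_eq n)]
  refine h.congr_deriv ?_
  rw [tildeH_eq, tildeH_eq, ← mul_assoc (√(n / 2)), sqrt_half_mul_hermiteNormConst_pred,
    ← mul_assoc (√((n + 1) / 2)), sqrt_half_mul_hermiteNormConst_succ,
    derivative_physHermitePoly, physHermitePoly_succ]
  simp only [eval_mul, eval_sub, eval_X, eval_ofNat, eval_natCast]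
  ring

open MeasureTheory in
/-- stiffness-matrix entries ∫ H̃_m' H̃_l of the Hermite–Galerkin method. -/
theorem tildeH_deriv_inner (m l : ℕ) :
    (∫ x : ℝ, deriv (tildeH m) x * tildeH l x) =
      if l + 1 = m then Real.sqrt ((m : ℝ) / 2)
      else if l = m + 1 then -Real.sqrt (((m : ℝ) + 1) / 2)
      else 0 := by
  have hderiv : deriv (tildeH m) = fun x =>
      √(m / 2) * tildeH (m - 1) x - √((m + 1) / 2) * tildeH (m + 1) x :=
    funext fun x => (hasDerivAt_tildeH m x).deriv
  simp_rw [hderiv, sub_mul, mul_assoc]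
  rw [integral_sub ((integrable_tildeH_mul_tildeH _ _).const_mul _)
      ((integrable_tildeH_mul_tildeH _ _).const_mul _),
    integral_const_mul, integral_const_mul, integral_tildeH_mul_tildeH,
    integral_tildeH_mul_tildeH]
  split_ifs <;> simp <;> omega
end
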